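/- arXiv:2604.13525 — 2 statements merged into one kernel-verified Lean document; each statement's English description precedes it below -/
import Mathlib

section
/- Let w > 0, 0 < p < 1, and y ∈ ℝ. Define δ = (2w(1-p))^{1/(2-p)} + w p (2w(1-p))^{(p-1)/(2-p)}. If |y| ≤ δ, then x = 0 is a global minimizer of the function h(x) = w|x|^p + (1/2)(x - y)^2 over ℝ. -/
/-!
Since `x * y ≤ |x| * δ`, it suffices that `δ * t ≤ w * t ^ p + t ^ 2 / 2` for `t ≥ 0`.
With `a = (2w(1-p))^(1/(2-p))`, i.e. `a ^ (2 - p) = 2w(1-p)`, one has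
`δ * a = (2 - p) * w * a ^ p`, and the substitution `t = a * u` turns this into
`(2 - p) * u ≤ u ^ p + (1 - p) * u ^ 2`, which is weighted AM-GM for `u ^ p` and `u ^ 2`
with weights `1/(2-p)` and `(1-p)/(2-p)`.
-/

open Real

theorem two_sub_mul_le_rpow_add_mul_sq {p u : ℝ} (hp : p ≤ 1) (hu : 0 ≤ u) :
    (2 - p) * u ≤ u ^ p + (1 - p) * u ^ 2 := by
  have h2p : 0 < 2 - p := by linarith
  have hamgm := geom_mean_le_arith_mean2_weighted (w₁ := 1 / (2 - p)) (w₂ := (1 - p) / (2 - p))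
    (by positivity) (div_nonneg (by linarith) h2p.le) (rpow_nonneg hu p) (sq_nonneg u)
    (by field_simp; ring)
  have hexp : p * (1 / (2 - p)) + (2 : ℕ) * ((1 - p) / (2 - p)) = 1 := by field_simp; ring
  have hgeom : (u ^ p) ^ (1 / (2 - p)) * (u ^ 2) ^ ((1 - p) / (2 - p)) = u := by
    rw [← rpow_natCast, ← rpow_mul hu, ← rpow_mul hu,
      ← rpow_add' hu (by rw [hexp]; exact one_ne_zero), hexp, rpow_one]
  rw [hgeom] at hamgm
  have := mul_le_mul_of_nonneg_left hamgm h2p.le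
  field_simp at this
  linarith

noncomputable def gstThreshold (w p : ℝ) : ℝ :=
  (2*w*(1-p)) ^ ((1:ℝ)/(2-p)) + w*p*(2*w*(1-p)) ^ ((p-1)/(2-p))

theorem gstThreshold_mul_le {w p t : ℝ} (hw : 0 < w) (hp : p < 1) (ht : 0 ≤ t) :
    gstThreshold w p * t ≤ w * t ^ p + t ^ 2 / 2 := by
  have h2p : (2 - p) ≠ 0 := by linarith
  set s := 2 * w * (1 - p) with hs_def
  have hs : 0 < s := by nlinarith
  set a := s ^ ((1:ℝ) / (2 - p))
  have ha : 0 < a := rpow_pos_of_pos hs _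
  have ha_pow : a ^ (2 - p) = s := by
    rw [← rpow_mul hs.le, one_div_mul_cancel h2p, rpow_one]
  have hs_pow : s ^ ((p - 1) / (2 - p)) = a ^ (p - 1) := by
    rw [← rpow_mul hs.le, one_div_mul_eq_div]
  have ha_sq : a ^ 2 = a ^ p * s := by
    rw [← ha_pow, ← rpow_add ha, add_sub_cancel, rpow_two]
  obtain ⟨u, hu, rfl⟩ : ∃ u, 0 ≤ u ∧ t = a * u :=
    ⟨t / a, div_nonneg ht ha.le, by field_simp⟩
  have key := mul_le_mul_of_nonneg_left (two_sub_mul_le_rpow_add_mul_sq hp.le hu)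
    (mul_nonneg (rpow_nonneg ha.le p) hw.le)
  calc gstThreshold w p * (a * u) = (a ^ 2 + w * p * (a ^ (p - 1) * a)) * u := by
        rw [gstThreshold, ← hs_def, hs_pow]; ring
    _ = a ^ p * w * ((2 - p) * u) := by
        rw [ha_sq, rpow_sub_one ha.ne', div_mul_cancel₀ _ ha.ne', hs_def]; ring
    _ ≤ a ^ p * w * (u ^ p + (1 - p) * u ^ 2) := key
    _ = w * (a * u) ^ p + (a * u) ^ 2 / 2 := by
        rw [mul_rpow ha.le hu, mul_pow, ha_sq, hs_def]; ring

theorem stmt_2 (w p y : ℝ) (hw : 0 < w) (hp0 : 0 < p) (hp1 : p < 1)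
    (δ : ℝ)
    (hδ : δ = (2*w*(1-p)) ^ ((1:ℝ)/(2-p)) + w*p*(2*w*(1-p)) ^ ((p-1)/(2-p)))
    (hy : |y| ≤ δ) :
    ∀ x : ℝ, w * |(0:ℝ)| ^ p + (1/2) * ((0:ℝ) - y)^2 ≤ w * |x| ^ p + (1/2) * (x - y)^2 := by
  intro x
  have hxy : x * y ≤ gstThreshold w p * |x| := by
    calc x * y ≤ |x| * |y| := by rw [← abs_mul]; exact le_abs_self _
      _ ≤ |x| * δ := by gcongr
      _ = gstThreshold w p * |x| := by rw [hδ, gstThreshold, mul_comm]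
  have hbound := gstThreshold_mul_le hw hp1 (abs_nonneg x)
  rw [abs_zero, zero_rpow hp0.ne']
  nlinarith [sq_abs x]
end

section
/- Let w > 0, 0 < p < 1, and y > δ where δ = (2w(1-p))^{1/(2-p)} + wp(2w(1-p))^{(p-1)/(2-p)}. Then there exists x* > 0 satisfying the stationarity equation x* - y + w p (x*)^{p-1} = 0. -/
/-! The function `x ↦ x - y + wp x ^ (p-1)` is continuous on `(0, ∞)`, nonnegative at `y`, and
negative at `x₀ = (2w(1-p)) ^ (1/(2-p))`, where its value is `δ - y`; the intermediate value
theorem gives a root between `x₀` and `y`. -/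

theorem Real.exists_pos_sub_add_mul_rpow_eq_zero {c r x₀ y : ℝ} (hc : 0 ≤ c) (hx₀ : 0 < x₀)
    (hy : x₀ + c * x₀ ^ r < y) : ∃ x : ℝ, 0 < x ∧ x - y + c * x ^ r = 0 := by
  have hx₀y : x₀ ≤ y := by
    have := mul_nonneg hc (Real.rpow_pos_of_pos hx₀ r).le
    linarith
  have hcont : ContinuousOn (fun x : ℝ => x - y + c * x ^ r) (Set.Icc x₀ y) := by
    refine ContinuousOn.add (by fun_prop) (continuousOn_const.mul ?_)
    exact continuousOn_id.rpow_const fun x hx => Or.inl (hx₀.trans_le hx.1).ne'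
  have hzero : (0 : ℝ) ∈ Set.Icc (x₀ - y + c * x₀ ^ r) (y - y + c * y ^ r) := by
    constructor
    · linarith
    · simpa using mul_nonneg hc (Real.rpow_nonneg (hx₀.trans_le hx₀y).le r)
  obtain ⟨x, hx, hfx⟩ := intermediate_value_Icc hx₀y hcont hzero
  exact ⟨x, hx₀.trans_le hx.1, hfx⟩

theorem Real.rpow_one_div_rpow {a : ℝ} (ha : 0 ≤ a) (s t : ℝ) :
    (a ^ (1 / s)) ^ t = a ^ (t / s) := by
  rw [← Real.rpow_mul ha, one_div_mul_eq_div]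

theorem stmt_3 (w p y : ℝ) (hw : 0 < w) (hp0 : 0 < p) (hp1 : p < 1)
    (δ : ℝ)
    (hδ : δ = (2*w*(1-p)) ^ ((1:ℝ)/(2-p)) + w*p*(2*w*(1-p)) ^ ((p-1)/(2-p)))
    (hy : δ < y) :
    ∃ x : ℝ, 0 < x ∧ x - y + w * p * x ^ (p-1) = 0 := by
  have hA : 0 < 2 * w * (1 - p) := by nlinarith
  refine Real.exists_pos_sub_add_mul_rpow_eq_zero (mul_pos hw hp0).le
    (Real.rpow_pos_of_pos hA ((1:ℝ)/(2-p))) ?_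
  rwa [Real.rpow_one_div_rpow hA.le, ← hδ]
end
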